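/- arXiv:1703.04689 — 2 statements merged into one kernel-verified Lean document; each statement's English description precedes it below -/
import Mathlib

section
/- For all m, n ≥ 0, the graded ℤ-linear map κ_{m,n} : C(m+1+n) → P(m,n), defined on a basis tuple (i₀ < … < i_p) in terms of r := card{k : 0 ≤ k ≤ p, i_k ≤ m} by κ_{m,n}(i₀,…,i_p) = (i₀,…,i_p) if r ≥ 2, κ_{m,n}(i₀,…,i_p) = (i₀,…,i_p) + (0,1)⊗(i₁,…,i_p) if r = 1 (the second term being 0 when p = 0), and κ_{m,n}(i₀,…,i_p) = (1)⊗(i₀,…,i_p) if r = 0, commutes with the differentials and the augmentations, i.e., is a morphism of augmented chain complexes of abelian groups. -/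
/-!
We represent the (augmented) normalized chain complex `C(N)` of the standard `N`-simplex by the
free abelian group on the finite subsets of `{0,…,N}`, a subset of cardinality `p+1` standing for
the strictly increasing `(p+1)`-tuple of its elements (a `p`-chain); the differential is the
alternating sum of the tuples obtained by deleting one entry (and vanishes on `0`-chains), and
the augmentation sends every `0`-chain basis element to `1` (and vanishes in higher degrees).
-/

noncomputable section

abbrev Ch (α : Type) := Finset α →₀ ℤ

/-- index of `a` in `s`: the number of smaller elements of `s`. -/
def idx {α : Type} [LinearOrder α] (s : Finset α) (a : α) : ℕ :=
  (s.filter (fun b => b < a)).card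

/-- value of the simplicial differential on a basis tuple:
`d(i₀,…,i_p) = Σₖ (−1)^k (i₀,…,î_k,…,i_p)` for `p ≥ 1`, and `0` on `0`-chains. -/
def dAux {α : Type} [LinearOrder α] (s : Finset α) : Ch α :=
  if 2 ≤ s.card then
    ∑ a ∈ s, ((-1 : ℤ) ^ (idx s a)) • Finsupp.single (s.erase a) (1 : ℤ)
  else 0

/-- the differential of `C(N)`. -/
def chD (α : Type) [LinearOrder α] : Ch α →ₗ[ℤ] Ch α :=
  Finsupp.lift _ ℤ _ dAux

/-- the augmentation of `C(N)`: `e(i₀) = 1` on `0`-chains, `0` in higher degrees. -/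
def chE (α : Type) : Ch α →ₗ[ℤ] ℤ :=
  Finsupp.lift _ ℤ _ (fun s => if s.card = 1 then (1 : ℤ) else 0)

/-- The chain map `c(ψ) : C(N') → C(N)` induced by a (monotone) map `ψ`,
`(i₀,…,i_p) ↦ (ψ(i₀),…,ψ(i_p))`, with the convention that a tuple with a repeated entry
denotes `0`. -/
def chMap {α β : Type} [DecidableEq β] (ψ : α → β) : Ch α →ₗ[ℤ] Ch β :=
  Finsupp.lift _ ℤ _ (fun s =>
    if (s.image ψ).card = s.card then Finsupp.single (s.image ψ) (1 : ℤ) else 0)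

/-- Basis indexing set for the pushout `P(m,n)`:
`inl s` is a plain tuple in `{0,…,m+1+n}`; `inr (a, t)` with `1 ∈ a ⊆ {0,1}` and
`t` a nonempty subset of `{0,…,n} ≅ {m+1,…,m+1+n}` represents the tensor basis element `a ⊗ t`
(`({1}, t) = (1)⊗t` and `({0,1}, t) = (0,1)⊗t`); the element `(0)⊗t` is identified with the
corresponding plain tuple. Other indices are spurious and irrelevant for the maps below. -/
abbrev PBs (m n : ℕ) := Finset (Fin (m+1+n+1)) ⊕ (Finset (Fin 2) × Finset (Fin (n+1)))

abbrev Pch (m n : ℕ) := PBs m n →₀ ℤ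

/-- the inclusion of `{0,…,n}` as `{m+1,…,m+1+n}` in `{0,…,m+1+n}`. -/
def pshift (m n : ℕ) : Fin (n+1) → Fin (m+1+n+1) :=
  fun j => ⟨m + 1 + (j : ℕ), by have := j.isLt; omega⟩

/-- the identification `{m+1,…,m+1+n} ≅ {0,…,n}` (sending `i` to `i − (m+1)`). -/
def punshift (m n : ℕ) : Fin (m+1+n+1) → Fin (n+1) :=
  fun i => ⟨(i : ℕ) - (m + 1), by have := i.isLt; omega⟩

/-- differential of `P(m,n)` on basis elements: `d` on plain tuples,
`d((1)⊗t) = (1)⊗d(t)`, and `d((0,1)⊗t) = (1)⊗t − ι(t) − (0,1)⊗d(t)`, where `ι(t)` is the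
plain tuple with entries in `{m+1,…,m+1+n}` corresponding to `t`. -/
def pdAux (m n : ℕ) : PBs m n → Pch m n
  | .inl s =>
      if 2 ≤ s.card then
        ∑ a ∈ s, ((-1 : ℤ) ^ (idx s a)) • Finsupp.single (Sum.inl (s.erase a) : PBs m n) (1 : ℤ)
      else 0
  | .inr p =>
      if p.1 = {1} then
        (if 2 ≤ p.2.card then
          ∑ b ∈ p.2, ((-1 : ℤ) ^ (idx p.2 b)) •
            Finsupp.single (Sum.inr (({1} : Finset (Fin 2)), p.2.erase b) : PBs m n) (1 : ℤ)
        else 0)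
      else if p.1 = {0, 1} ∧ p.2.Nonempty then
        Finsupp.single (Sum.inr (({1} : Finset (Fin 2)), p.2) : PBs m n) 1
        - Finsupp.single (Sum.inl (p.2.image (pshift m n)) : PBs m n) 1
        - (if 2 ≤ p.2.card then
            ∑ b ∈ p.2, ((-1 : ℤ) ^ (idx p.2 b)) •
              Finsupp.single (Sum.inr (({0, 1} : Finset (Fin 2)), p.2.erase b) : PBs m n) (1 : ℤ)
          else 0)
      else 0

/-- the differential of `P(m,n)`. -/
def pD (m n : ℕ) : Pch m n →ₗ[ℤ] Pch m n := Finsupp.lift _ ℤ _ (pdAux m n)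

/-- the augmentation of `P(m,n)`, extending that of `C(m+1+n)` by `e((1)⊗(i₀)) = 1`. -/
def pE (m n : ℕ) : Pch m n →ₗ[ℤ] ℤ :=
  Finsupp.lift _ ℤ _ (fun x => match x with
    | .inl s => if s.card = 1 then (1 : ℤ) else 0
    | .inr p => if p.1 = {1} ∧ p.2.card = 1 then (1 : ℤ) else 0)

/-- `κ_{m,n}` on a basis tuple `s`, in terms of `r := card {i ∈ s | i ≤ m}`:
`κ(s) = s` if `r ≥ 2`; `κ(s) = s + (0,1)⊗(i₁,…,i_p)` if `r = 1` (the second term being `0`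
when `p = 0`); `κ(s) = (1)⊗s` if `r = 0`. -/
def kapAux (m n : ℕ) (s : Finset (Fin (m+1+n+1))) : Pch m n :=
  if 2 ≤ (s.filter (fun i : Fin (m+1+n+1) => (i : ℕ) ≤ m)).card then
    Finsupp.single (Sum.inl s : PBs m n) 1
  else if (s.filter (fun i : Fin (m+1+n+1) => (i : ℕ) ≤ m)).card = 1 then
    Finsupp.single (Sum.inl s : PBs m n) 1 +
      (if (s.filter (fun i : Fin (m+1+n+1) => m < (i : ℕ))).Nonempty then
        Finsupp.single
          (Sum.inr (({0, 1} : Finset (Fin 2)),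
            (s.filter (fun i : Fin (m+1+n+1) => m < (i : ℕ))).image (punshift m n)) : PBs m n) 1
      else 0)
  else Finsupp.single (Sum.inr (({1} : Finset (Fin 2)), s.image (punshift m n)) : PBs m n) 1

/-- the graded `ℤ`-linear map `κ_{m,n} : C(m+1+n) → P(m,n)`. -/
def kap (m n : ℕ) : Ch (Fin (m+1+n+1)) →ₗ[ℤ] Pch m n := Finsupp.lift _ ℤ _ (kapAux m n)

/-!
Write a simplex as `s = L ∪ R` with `L ≤ m < R`; then `κ(s)` depends only on `|L|` and on `R`.
The boundary of such a join obeys the Leibniz rule `∂(L ∪ R) = ∂L ∪ R ± L ∪ ∂R`, so both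
`dκ(s)` and `κ(ds)` reduce to the plain boundary of `s` plus correction terms, which match:
for `|L| = 2` the two faces of `L` produce the same correction `(0,1)⊗R` with opposite signs,
and for `|L| = 1` the map `κ` replaces the face `R` of `s` by `(1)⊗R`, the difference
`(1)⊗R − R` being exactly the extra term of `d((0,1)⊗R)`.
-/

lemma Finsupp.lift_single_one {X M : Type} [AddCommGroup M] (f : X → M) (x : X) :
    Finsupp.lift M ℤ X f (Finsupp.single x 1) = f x := by
  simp [Finsupp.lift_apply]

section FaceSum

open Finset

variable {α β M : Type} [LinearOrder α] [LinearOrder β] [AddCommGroup M]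

def faceSum (s : Finset α) (F : Finset α → M) : M :=
  ∑ a ∈ s, (-1 : ℤ) ^ idx s a • F (s.erase a)

lemma faceSum_congr {s : Finset α} {F G : Finset α → M}
    (h : ∀ a ∈ s, F (s.erase a) = G (s.erase a)) : faceSum s F = faceSum s G :=
  sum_congr rfl fun a ha => by rw [h a ha]

lemma faceSum_add (s : Finset α) (F G : Finset α → M) :
    faceSum s (F + G) = faceSum s F + faceSum s G := by
  simp only [faceSum, Pi.add_apply, smul_add, sum_add_distrib]

lemma faceSum_singleton (a : α) (F : Finset α → M) : faceSum {a} F = F ∅ := by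
  simp [faceSum, idx, filter_singleton]

lemma faceSum_const_of_card_eq_two {s : Finset α} (hs : s.card = 2) (c : M) :
    faceSum s (fun _ => c) = 0 := by
  obtain ⟨x, y, hxy, rfl⟩ := card_eq_two.1 hs
  wlog h : x < y generalizing x y
  · rw [pair_comm] at hs ⊢
    exact this y x hxy.symm hs (hxy.lt_or_gt.resolve_left h)
  have hx : idx {x, y} x = 0 := by simp [idx, filter_insert, filter_singleton, h.not_gt]
  have hy : idx {x, y} y = 1 := by simp [idx, filter_insert, filter_singleton, h]
  simp [faceSum, sum_pair hxy, hx, hy]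

lemma idx_image {f : α → β} {s : Finset α} (hf : StrictMonoOn f s) {a : α} (ha : a ∈ s) :
    idx (s.image f) (f a) = idx s a := by
  rw [idx, filter_image, idx, card_image_of_injOn (hf.injOn.mono (filter_subset _ _))]
  exact congrArg card (filter_congr fun x hx => hf.lt_iff_lt hx ha)

lemma faceSum_image {f : α → β} {s : Finset α} (hf : StrictMonoOn f s) (F : Finset β → M) :
    faceSum (s.image f) F = faceSum s (fun t => F (t.image f)) := by
  rw [faceSum, sum_image hf.injOn]
  refine sum_congr rfl fun a ha => ?_
  rw [idx_image hf ha, erase_eq, erase_eq, ← image_singleton,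
    ← image_sdiff_of_injOn hf.injOn (singleton_subset_iff.2 ha)]

section Join

variable {L R : Finset α} (hLR : ∀ x ∈ L, ∀ y ∈ R, x < y)
include hLR

lemma idx_union_of_mem_left {a : α} (ha : a ∈ L) : idx (L ∪ R) a = idx L a := by
  rw [idx, filter_union, filter_false_of_mem fun y hy => (hLR a ha y hy).not_gt, union_empty,
    idx]

lemma idx_union_of_mem_right {a : α} (ha : a ∈ R) : idx (L ∪ R) a = L.card + idx R a := by
  rw [idx, filter_union, filter_true_of_mem fun x hx => hLR x hx a ha, card_union_of_disjoint,
    idx]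
  exact disjoint_left.2 fun x hxL hxR => (hLR x hxL x (mem_filter.1 hxR).1).false

/-- The Leibniz rule for the boundary of a join. -/
lemma faceSum_union (F : Finset α → M) :
    faceSum (L ∪ R) F =
      faceSum L (fun t => F (t ∪ R)) + (-1 : ℤ) ^ L.card • faceSum R (fun t => F (L ∪ t)) := by
  have hdisj : Disjoint L R := disjoint_left.2 fun x hxL hxR => (hLR x hxL x hxR).false
  rw [faceSum, sum_union hdisj, faceSum, faceSum, Finset.smul_sum]
  congr 1
  · refine sum_congr rfl fun a ha => ?_
    rw [idx_union_of_mem_left hLR ha, erase_union_distrib,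
      erase_eq_of_notMem (disjoint_left.1 hdisj ha)]
  · refine sum_congr rfl fun a ha => ?_
    rw [idx_union_of_mem_right hLR ha, erase_union_distrib,
      erase_eq_of_notMem (disjoint_right.1 hdisj ha), pow_add, mul_smul]

end Join

end FaceSum

section Kappa

open Finset

variable (m n : ℕ)

/- `plain m n s`, `vertexTensor m n R` and `edgeTensor m n R` are the basis elements `s`,
`(1)⊗R` and `(0,1)⊗R` of `P(m,n)`, where `R ⊆ {m+1,…,m+1+n}` is given in the coordinates of
`C(m+1+n)`. -/

def plain (s : Finset (Fin (m+1+n+1))) : Pch m n := Finsupp.single (Sum.inl s) 1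

def vertexTensor (R : Finset (Fin (m+1+n+1))) : Pch m n :=
  Finsupp.single (Sum.inr ({1}, R.image (punshift m n))) 1

def edgeTensor (R : Finset (Fin (m+1+n+1))) : Pch m n :=
  if R.Nonempty then Finsupp.single (Sum.inr ({0, 1}, R.image (punshift m n))) 1 else 0

variable {m n} {L R : Finset (Fin (m+1+n+1))}

lemma strictMonoOn_punshift (hR : ∀ i ∈ R, m < (i : ℕ)) : StrictMonoOn (punshift m n) R :=
  fun x hx y _ hxy => by
    have := hR x hx
    simp only [punshift, Fin.lt_def] at hxy ⊢
    omega

lemma image_pshift_image_punshift (hR : ∀ i ∈ R, m < (i : ℕ)) :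
    (R.image (punshift m n)).image (pshift m n) = R := by
  rw [image_image, image_congr (g := id) fun i hi => Fin.ext (by
    have := hR i hi
    simp only [Function.comp_apply, pshift, punshift, id]
    omega), image_id]

lemma exists_union_of_forall_le_of_forall_gt (s : Finset (Fin (m+1+n+1))) :
    ∃ L R : Finset (Fin (m+1+n+1)),
      (∀ i ∈ L, (i : ℕ) ≤ m) ∧ (∀ i ∈ R, m < (i : ℕ)) ∧ s = L ∪ R := by
  refine ⟨s.filter fun i => (i : ℕ) ≤ m, s.filter fun i => m < (i : ℕ),
    fun i hi => (mem_filter.1 hi).2, fun i hi => (mem_filter.1 hi).2, ?_⟩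
  ext i
  simp only [mem_union, mem_filter]
  have := le_or_gt (i : ℕ) m
  tauto

lemma kapAux_of_forall_gt (hR : ∀ i ∈ R, m < (i : ℕ)) : kapAux m n R = vertexTensor m n R := by
  have hL : (R.filter fun i : Fin (m+1+n+1) => (i : ℕ) ≤ m).card = 0 := by
    simpa [filter_eq_empty_iff] using fun i hi => hR i hi
  rw [kapAux, hL, if_neg (by omega), if_neg (by omega), vertexTensor]

section Split

variable (hL : ∀ i ∈ L, (i : ℕ) ≤ m) (hR : ∀ i ∈ R, m < (i : ℕ))
include hL hR

lemma forall_lt_of_forall_le_of_forall_gt : ∀ x ∈ L, ∀ y ∈ R, x < y :=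
  fun x hx y hy => Fin.lt_def.2 ((hL x hx).trans_lt (hR y hy))

lemma filter_le_union : (L ∪ R).filter (fun i : Fin (m+1+n+1) => (i : ℕ) ≤ m) = L := by
  ext i
  simp only [mem_filter, mem_union]
  constructor
  · rintro ⟨hi | hi, h⟩
    · exact hi
    · exact absurd h (hR i hi).not_ge
  · intro hi
    exact ⟨Or.inl hi, hL i hi⟩

lemma filter_gt_union : (L ∪ R).filter (fun i : Fin (m+1+n+1) => m < (i : ℕ)) = R := by
  ext i
  simp only [mem_filter, mem_union]
  constructor
  · rintro ⟨hi | hi, h⟩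
    · exact absurd h (hL i hi).not_gt
    · exact hi
  · intro hi
    exact ⟨Or.inr hi, hR i hi⟩

lemma kapAux_union_of_two_le_card (h : 2 ≤ L.card) :
    kapAux m n (L ∪ R) = plain m n (L ∪ R) := by
  rw [kapAux, filter_le_union hL hR, if_pos h, plain]

lemma kapAux_union_of_card_eq_one (h : L.card = 1) :
    kapAux m n (L ∪ R) = plain m n (L ∪ R) + edgeTensor m n R := by
  rw [kapAux, filter_le_union hL hR, if_neg (by omega), if_pos h, filter_gt_union hL hR, plain,
    edgeTensor]

end Split

lemma kap_single (s : Finset (Fin (m+1+n+1))) : kap m n (Finsupp.single s 1) = kapAux m n s :=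
  Finsupp.lift_single_one _ _

lemma kap_dAux (s : Finset (Fin (m+1+n+1))) :
    kap m n (dAux s) = if 2 ≤ s.card then faceSum s (kapAux m n) else 0 := by
  rw [dAux]
  split_ifs
  · simp only [faceSum, map_sum, map_zsmul, kap_single]
  · exact map_zero _

lemma pD_plain (s : Finset (Fin (m+1+n+1))) :
    pD m n (plain m n s) = if 2 ≤ s.card then faceSum s (plain m n) else 0 :=
  Finsupp.lift_single_one _ _

lemma pD_vertexTensor (hR : ∀ i ∈ R, m < (i : ℕ)) :
    pD m n (vertexTensor m n R) = if 2 ≤ R.card then faceSum R (vertexTensor m n) else 0 := by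
  rw [vertexTensor, pD, Finsupp.lift_single_one, pdAux, if_pos rfl,
    card_image_of_injOn (strictMonoOn_punshift hR).injOn]
  change (if 2 ≤ R.card then faceSum (R.image (punshift m n))
    (fun u => Finsupp.single (Sum.inr ({1}, u) : PBs m n) 1) else 0) = _
  rw [faceSum_image (strictMonoOn_punshift hR)]
  rfl

lemma pD_edgeTensor (hR : ∀ i ∈ R, m < (i : ℕ)) (hne : R.Nonempty) :
    pD m n (edgeTensor m n R) =
      vertexTensor m n R - plain m n R - faceSum R (edgeTensor m n) := by
  have h01 : ({0, 1} : Finset (Fin 2)) ≠ {1} := by decide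
  rw [edgeTensor, if_pos hne, pD, Finsupp.lift_single_one, pdAux, if_neg h01,
    if_pos ⟨rfl, hne.image _⟩, image_pshift_image_punshift hR,
    card_image_of_injOn (strictMonoOn_punshift hR).injOn, vertexTensor, plain]
  congr 1
  change (if 2 ≤ R.card then faceSum (R.image (punshift m n))
    (fun u => Finsupp.single (Sum.inr ({0, 1}, u) : PBs m n) 1) else 0) = _
  split_ifs with h2
  · rw [faceSum_image (strictMonoOn_punshift hR)]
    refine faceSum_congr fun a ha => ?_
    rw [edgeTensor, if_pos (by rw [← card_pos, card_erase_of_mem ha]; omega)]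
  · have h1 : R.card = 1 := by have := hne.card_pos; omega
    obtain ⟨a, rfl⟩ := card_eq_one.1 h1
    simp [faceSum_singleton, edgeTensor]

lemma pE_plain (s : Finset (Fin (m+1+n+1))) :
    pE m n (plain m n s) = if s.card = 1 then 1 else 0 :=
  Finsupp.lift_single_one _ _

lemma pE_edgeTensor (R : Finset (Fin (m+1+n+1))) : pE m n (edgeTensor m n R) = 0 := by
  rw [edgeTensor]
  split_ifs
  · have h01 : ({0, 1} : Finset (Fin 2)) ≠ {1} := by decide
    exact (Finsupp.lift_single_one _ _).trans (if_neg fun h => h01 h.1)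
  · exact map_zero _

lemma pE_vertexTensor (hR : ∀ i ∈ R, m < (i : ℕ)) :
    pE m n (vertexTensor m n R) = if R.card = 1 then 1 else 0 := by
  rw [vertexTensor, pE, Finsupp.lift_single_one]
  simp [card_image_of_injOn (strictMonoOn_punshift hR).injOn]

end Kappa

section KappaChainMap

open Finset

variable {m n : ℕ} {L R : Finset (Fin (m+1+n+1))}

lemma pD_kapAux_of_forall_gt (hR : ∀ i ∈ R, m < (i : ℕ)) :
    pD m n (kapAux m n R) = kap m n (dAux R) := by
  rw [kapAux_of_forall_gt hR, pD_vertexTensor hR, kap_dAux]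
  refine if_congr Iff.rfl (faceSum_congr fun a _ => ?_) rfl
  rw [kapAux_of_forall_gt fun i hi => hR i (mem_of_mem_erase hi)]

section Split

variable (hL : ∀ i ∈ L, (i : ℕ) ≤ m) (hR : ∀ i ∈ R, m < (i : ℕ))
include hL hR

lemma pD_kapAux_union_of_card_eq_one (h : L.card = 1) :
    pD m n (kapAux m n (L ∪ R)) = kap m n (dAux (L ∪ R)) := by
  have hLR := forall_lt_of_forall_le_of_forall_gt hL hR
  have hRL : ∀ t ⊆ R, kapAux m n (L ∪ t) = plain m n (L ∪ t) + edgeTensor m n t :=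
    fun t ht => kapAux_union_of_card_eq_one hL (fun i hi => hR i (ht hi)) h
  rw [hRL R subset_rfl, map_add, pD_plain, kap_dAux]
  obtain ⟨a, rfl⟩ := card_eq_one.1 h
  rcases R.eq_empty_or_nonempty with rfl | hne
  · simp [edgeTensor]
  have h2 : 2 ≤ ({a} ∪ R).card := by
    rw [card_union_of_disjoint (disjoint_left.2 fun x hx hxR => (hLR x hx x hxR).false),
      card_singleton]
    have := hne.card_pos
    omega
  have hhigh : faceSum R (fun t => kapAux m n ({a} ∪ t)) =
      faceSum R (fun t => plain m n ({a} ∪ t)) + faceSum R (edgeTensor m n) := by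
    rw [← faceSum_add]
    exact faceSum_congr fun b _ => hRL _ (erase_subset b R)
  rw [if_pos h2, if_pos h2, pD_edgeTensor hR hne, faceSum_union hLR, faceSum_union hLR, hhigh]
  simp only [faceSum_singleton, empty_union, kapAux_of_forall_gt hR, card_singleton]
  abel

lemma pD_kapAux_union_of_two_le_card (h : 2 ≤ L.card) :
    pD m n (kapAux m n (L ∪ R)) = kap m n (dAux (L ∪ R)) := by
  have hLR := forall_lt_of_forall_le_of_forall_gt hL hR
  have h2 : 2 ≤ (L ∪ R).card := h.trans (card_le_card subset_union_left)
  have hlow : faceSum L (fun t => kapAux m n (t ∪ R)) =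
      faceSum L (fun t => plain m n (t ∪ R)) +
        faceSum L (fun _ => if L.card = 2 then edgeTensor m n R else 0) := by
    rw [← faceSum_add]
    refine faceSum_congr fun a ha => ?_
    have hL' : ∀ i ∈ L.erase a, (i : ℕ) ≤ m := fun i hi => hL i (mem_of_mem_erase hi)
    have hcard := card_erase_of_mem ha
    split_ifs with h2
    · rw [Pi.add_apply, kapAux_union_of_card_eq_one hL' hR (by omega)]
    · rw [Pi.add_apply, kapAux_union_of_two_le_card hL' hR (by omega), add_zero]
  have hcorner : faceSum L (fun _ => if L.card = 2 then edgeTensor m n R else 0) = 0 := by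
    split_ifs with h2
    · exact faceSum_const_of_card_eq_two h2 _
    · simp [faceSum]
  have hhigh : faceSum R (fun t => kapAux m n (L ∪ t)) = faceSum R (fun t => plain m n (L ∪ t)) :=
    faceSum_congr fun a _ =>
      kapAux_union_of_two_le_card hL (fun i hi => hR i (mem_of_mem_erase hi)) h
  rw [kapAux_union_of_two_le_card hL hR h, pD_plain, kap_dAux, if_pos h2, if_pos h2,
    faceSum_union hLR, faceSum_union hLR, hlow, hcorner, add_zero, hhigh]

end Split

lemma pD_kapAux (s : Finset (Fin (m+1+n+1))) : pD m n (kapAux m n s) = kap m n (dAux s) := by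
  obtain ⟨L, R, hL, hR, rfl⟩ := exists_union_of_forall_le_of_forall_gt s
  rcases Nat.lt_or_ge L.card 2 with hlt | h2
  · rcases (by omega : L.card = 0 ∨ L.card = 1) with h0 | h1
    · rw [card_eq_zero.1 h0, empty_union]
      exact pD_kapAux_of_forall_gt hR
    · exact pD_kapAux_union_of_card_eq_one hL hR h1
  · exact pD_kapAux_union_of_two_le_card hL hR h2

lemma pE_kapAux (s : Finset (Fin (m+1+n+1))) :
    pE m n (kapAux m n s) = if s.card = 1 then 1 else 0 := by
  obtain ⟨L, R, hL, hR, rfl⟩ := exists_union_of_forall_le_of_forall_gt s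
  rcases Nat.lt_or_ge L.card 2 with hlt | h2
  · rcases (by omega : L.card = 0 ∨ L.card = 1) with h0 | h1
    · rw [card_eq_zero.1 h0, empty_union, kapAux_of_forall_gt hR, pE_vertexTensor hR]
    · rw [kapAux_union_of_card_eq_one hL hR h1, map_add, pE_plain, pE_edgeTensor, add_zero]
  · rw [kapAux_union_of_two_le_card hL hR h2, pE_plain]

end KappaChainMap

/-- STATEMENT 9: `κ_{m,n} : C(m+1+n) → P(m,n)` commutes with the differentials and the
augmentations, i.e. it is a morphism of augmented chain complexes of abelian groups. -/
theorem kap_chain_complex_morphism (m n : ℕ) :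
    (pD m n).comp (kap m n) = (kap m n).comp (chD (Fin (m+1+n+1))) ∧
    (pE m n).comp (kap m n) = chE (Fin (m+1+n+1)) := by
  constructor <;> ext s : 2 <;>
    simp only [LinearMap.comp_apply, Finsupp.lsingle_apply, kap_single, chD, chE,
      Finsupp.lift_single_one]
  · exact pD_kapAux s
  · exact pE_kapAux s

end
end

section
/- For every monotone map ψ : [n'] → [n], letting ψ' := id_{[m]} ⊔ ψ : [m+1+n'] → [m+1+n], one has f_n ∘ c(ψ') = c(ψ') ∘ f_{n'} as graded maps C(m+1+n') → C(m+1+n). -/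
/-!
We represent the (augmented) normalized chain complex `C(N)` of the standard `N`-simplex by the
free abelian group on the finite subsets of `{0,…,N}`, a subset of cardinality `p+1` standing for
the strictly increasing `(p+1)`-tuple of its elements (a `p`-chain); the differential is the
alternating sum of the tuples obtained by deleting one entry (and vanishes on `0`-chains), and
the augmentation sends every `0`-chain basis element to `1` (and vanishes in higher degrees).
-/

noncomputable section

/-- the element `m` of `{0,…,m+1+n}`. -/
def elM (m n : ℕ) : Fin (m+1+n+1) := ⟨m, by omega⟩

/-- `f_n` on a basis tuple `(i₀ < … < i_p)`, following the case analysis of the paper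
(expressed via the sets of entries `< m` and `> m`):
`f_n = id` if `i_p ≤ m` or `m ≤ i₀`; `f_n(i₀,i₁) = (i₀,m) + (m,i₁)` if `p = 1` and
`i₀ < m < i₁`; `f_n(i₀,…,i_p) = (m,i₁,…,i_p)` if `p > 1` and `i₀ < m < i₁`;
`f_n(i₀,…,i_p) = (i₀,…,i_{p−1},m)` if `p > 1` and `i_{p−1} < m < i_p`; `f_n = 0` otherwise
(i.e. if `i₁ ≤ m ≤ i_{p−1}`). -/
def fnAux (m n : ℕ) (s : Finset (Fin (m+1+n+1))) : Ch (Fin (m+1+n+1)) :=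
  let M := elM m n
  let lo := s.filter (fun i => i < M)
  let hi := s.filter (fun i => M < i)
  if lo.card = 0 ∨ hi.card = 0 then Finsupp.single s 1
  else if lo.card = 1 ∧ hi.card = 1 ∧ M ∉ s then
    Finsupp.single (insert M lo) 1 + Finsupp.single (insert M hi) 1
  else if lo.card = 1 ∧ 2 ≤ hi.card ∧ M ∉ s then Finsupp.single (insert M hi) 1
  else if 2 ≤ lo.card ∧ hi.card = 1 ∧ M ∉ s then Finsupp.single (insert M lo) 1
  else 0

/-- the graded `ℤ`-linear endomorphism `f_n` of `C(m+1+n)`. -/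
def fN (m n : ℕ) : Ch (Fin (m+1+n+1)) →ₗ[ℤ] Ch (Fin (m+1+n+1)) :=
  Finsupp.lift _ ℤ _ (fnAux m n)

/-- the join `φ ⊔ ψ : [m'+1+n'] → [m+1+n]` of two maps, sending `i` to `φ(i)` for `i ≤ m'`
and to `m+1+ψ(i−1−m')` for `i ≥ m'+1`. -/
def joinFun {m' m n' n : ℕ} (φ : Fin (m'+1) → Fin (m+1)) (ψ : Fin (n'+1) → Fin (n+1)) :
    Fin (m'+1+n'+1) → Fin (m+1+n+1) := fun i =>
  if h : (i : ℕ) ≤ m' then Fin.castLE (by omega) (φ ⟨(i : ℕ), by omega⟩)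
  else
    have h2 : (i : ℕ) - (m' + 1) < n' + 1 := by have := i.isLt; omega
    Fin.castLE (by omega) (Fin.natAdd (m+1) (ψ ⟨(i : ℕ) - (m' + 1), h2⟩))

/-!
`f_n` only sees how a simplex sits relative to the vertex `m`: its vertices below `m`, above `m`,
and whether `m` is one of them. The map `ψ' = id ⊔ ψ` fixes `m`, preserves both sides of it and
is injective on `{0,…,m}`, so it transports this data from `s` to `ψ'(s)` whenever `c(ψ')` does not
kill `s`. If it does kill `s`, two vertices above `m` collide, and then `f_{n'}(s)` is killed too:
it is `0`, `s` itself, or `m` together with the vertices of `s` above `m`.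
-/

lemma chMap_single {α β : Type} [DecidableEq β] (g : α → β) (s : Finset α) :
    chMap g (Finsupp.single s 1) =
      if Set.InjOn g s then Finsupp.single (s.image g) 1 else 0 := by
  simp [chMap, Finset.card_image_iff]

lemma chMap_single_of_injOn {α β : Type} [DecidableEq β] {g : α → β} {s : Finset α}
    (hs : Set.InjOn g s) :
    chMap g (Finsupp.single s 1) = Finsupp.single (s.image g) 1 := by
  rw [chMap_single, if_pos hs]

lemma chMap_single_of_not_injOn {α β : Type} [DecidableEq β] {g : α → β} {s : Finset α}
    (hs : ¬ Set.InjOn g s) :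
    chMap g (Finsupp.single s 1) = 0 := by
  rw [chMap_single, if_neg hs]

section Split

variable {α β : Type} [LinearOrder α] [LinearOrder β]

def splitAux (c : α) (s : Finset α) : Ch α :=
  let lo := s.filter (fun i => i < c)
  let hi := s.filter (fun i => c < i)
  if lo.card = 0 ∨ hi.card = 0 then Finsupp.single s 1
  else if lo.card = 1 ∧ hi.card = 1 ∧ c ∉ s then
    Finsupp.single (insert c lo) 1 + Finsupp.single (insert c hi) 1
  else if lo.card = 1 ∧ 2 ≤ hi.card ∧ c ∉ s then Finsupp.single (insert c hi) 1
  else if 2 ≤ lo.card ∧ hi.card = 1 ∧ c ∉ s then Finsupp.single (insert c lo) 1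
  else 0

def splitMap (c : α) : Ch α →ₗ[ℤ] Ch α :=
  Finsupp.lift _ ℤ _ (splitAux c)

lemma splitMap_single (c : α) (s : Finset α) :
    splitMap c (Finsupp.single s 1) = splitAux c s := by
  simp [splitMap]

structure PreservesSplit (g : α → β) (a : α) (b : β) : Prop where
  lt_iff : ∀ x, g x < b ↔ x < a
  gt_iff : ∀ x, b < g x ↔ a < x
  injOn_Iic : Set.InjOn g (Set.Iic a)

namespace PreservesSplit

variable {g : α → β} {a : α} {b : β}

lemma eq_iff (hg : PreservesSplit g a b) (x : α) : g x = b ↔ x = a := by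
  simp only [le_antisymm_iff, ← not_lt, hg.lt_iff, hg.gt_iff]

lemma map_self (hg : PreservesSplit g a b) : g a = b :=
  (hg.eq_iff a).mpr rfl

lemma mem_image_iff (hg : PreservesSplit g a b) (s : Finset α) : b ∈ s.image g ↔ a ∈ s := by
  simp [Finset.mem_image, hg.eq_iff]

lemma filter_lt_image (hg : PreservesSplit g a b) (s : Finset α) :
    (s.image g).filter (· < b) = (s.filter (· < a)).image g := by
  simp only [Finset.filter_image, hg.lt_iff]

lemma filter_gt_image (hg : PreservesSplit g a b) (s : Finset α) :
    (s.image g).filter (b < ·) = (s.filter (a < ·)).image g := by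
  simp only [Finset.filter_image, hg.gt_iff]

lemma injOn_iff (hg : PreservesSplit g a b) (s : Finset α) :
    Set.InjOn g s ↔ Set.InjOn g (s.filter (a < ·)) := by
  refine ⟨fun hs => hs.mono (Finset.coe_subset.mpr (Finset.filter_subset _ _)),
    fun hhi x hx y hy hxy => ?_⟩
  by_cases hxa : a < x
  · have hya : a < y := (hg.gt_iff y).mp (hxy ▸ (hg.gt_iff x).mpr hxa)
    exact hhi (Finset.mem_filter.mpr ⟨hx, hxa⟩) (Finset.mem_filter.mpr ⟨hy, hya⟩) hxy
  · have hya : ¬ a < y := (hg.gt_iff y).not.mp (hxy ▸ (hg.gt_iff x).not.mpr hxa)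
    exact hg.injOn_Iic (not_lt.mp hxa) (not_lt.mp hya) hxy

lemma injOn_insert_filter_lt (hg : PreservesSplit g a b) (s : Finset α) :
    Set.InjOn g ↑(insert a (s.filter (· < a))) :=
  hg.injOn_Iic.mono fun x hx => by
    rcases Finset.mem_insert.mp hx with rfl | hx
    · exact le_rfl
    · exact (Finset.mem_filter.mp hx).2.le

lemma injOn_insert_filter_gt_iff (hg : PreservesSplit g a b) (s : Finset α) :
    Set.InjOn g ↑(insert a (s.filter (a < ·))) ↔ Set.InjOn g (s.filter (a < ·)) := by
  rw [hg.injOn_iff, Finset.filter_insert, if_neg (lt_irrefl a), Finset.filter_filter]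
  simp only [and_self]

lemma splitAux_image (hg : PreservesSplit g a b) {s : Finset α} (hs : Set.InjOn g s) :
    splitAux b (s.image g) = chMap g (splitAux a s) := by
  have hinj_hi : Set.InjOn g (s.filter (a < ·)) := (hg.injOn_iff s).mp hs
  have hinj_insert_lo := hg.injOn_insert_filter_lt s
  have hinj_insert_hi := (hg.injOn_insert_filter_gt_iff s).mpr hinj_hi
  have hcard_lo := Finset.card_image_of_injOn (hg.injOn_Iic.mono (s₁ := s.filter (· < a))
    fun x hx => (Finset.mem_filter.mp hx).2.le)
  have hcard_hi := Finset.card_image_of_injOn hinj_hi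
  simp only [splitAux, hg.filter_lt_image, hg.filter_gt_image, hg.mem_image_iff, hcard_lo,
    hcard_hi]
  split_ifs <;>
    simp only [map_add, map_zero, chMap_single_of_injOn hs,
      chMap_single_of_injOn hinj_insert_lo, chMap_single_of_injOn hinj_insert_hi,
      Finset.image_insert, hg.map_self]

lemma chMap_splitAux_of_not_injOn (hg : PreservesSplit g a b) {s : Finset α}
    (hs : ¬ Set.InjOn g s) : chMap g (splitAux a s) = 0 := by
  have hninj_hi : ¬ Set.InjOn g (s.filter (a < ·)) := (hg.injOn_iff s).not.mp hs
  have hninj_insert_hi := (hg.injOn_insert_filter_gt_iff s).not.mpr hninj_hi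
  have two_le_card_hi : 2 ≤ (s.filter (a < ·)).card := by
    by_contra! h
    exact hninj_hi fun x hx y hy _ => Finset.card_le_one.mp (Nat.le_of_lt_succ h) x hx y hy
  simp only [splitAux]
  split_ifs <;> first
    | omega
    | simp only [map_zero, chMap_single_of_not_injOn hs, chMap_single_of_not_injOn hninj_insert_hi]

lemma splitMap_chMap_single (hg : PreservesSplit g a b) (s : Finset α) :
    splitMap b (chMap g (Finsupp.single s 1)) = chMap g (splitAux a s) := by
  by_cases hs : Set.InjOn g s
  · rw [chMap_single_of_injOn hs, splitMap_single, hg.splitAux_image hs]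
  · rw [chMap_single_of_not_injOn hs, map_zero, hg.chMap_splitAux_of_not_injOn hs]

theorem splitMap_comp_chMap (hg : PreservesSplit g a b) :
    (splitMap b).comp (chMap g) = (chMap g).comp (splitMap a) := by
  refine Finsupp.lhom_ext' fun s => LinearMap.ext_ring ?_
  simp [hg.splitMap_chMap_single, splitMap_single]

end PreservesSplit

end Split

lemma fN_eq_splitMap (m n : ℕ) : fN m n = splitMap (elM m n) := rfl

lemma joinFun_id_val {m n' n : ℕ} (ψ : Fin (n'+1) → Fin (n+1)) (i : Fin (m+1+n'+1)) :
    (joinFun (id : Fin (m+1) → Fin (m+1)) ψ i : ℕ) =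
      if h : (i : ℕ) ≤ m then (i : ℕ)
      else m + 1 + (ψ ⟨(i : ℕ) - (m+1), by have := i.isLt; omega⟩ : ℕ) := by
  unfold joinFun
  split_ifs <;> simp

lemma preservesSplit_joinFun_id {m n' n : ℕ} (ψ : Fin (n'+1) → Fin (n+1)) :
    PreservesSplit (joinFun (id : Fin (m+1) → Fin (m+1)) ψ) (elM m n') (elM m n) where
  lt_iff i := by
    simp only [Fin.lt_def, joinFun_id_val, elM]
    split_ifs <;> omega
  gt_iff i := by
    simp only [Fin.lt_def, joinFun_id_val, elM]
    split_ifs <;> omega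
  injOn_Iic i hi j hj hij := by
    simp only [Set.mem_Iic, Fin.le_def, elM] at hi hj
    have := congrArg Fin.val hij
    simp only [joinFun_id_val, dif_pos hi, dif_pos hj] at this
    exact Fin.ext this

/-- STATEMENT 12: for every monotone `ψ : [n'] → [n]`, with `ψ' := id_{[m]} ⊔ ψ`, one has
`f_n ∘ c(ψ') = c(ψ') ∘ f_{n'}`. -/
theorem fN_natural {n' : ℕ} (m n : ℕ) (ψ : Fin (n'+1) →o Fin (n+1)) :
    (fN m n).comp (chMap (joinFun (id : Fin (m+1) → Fin (m+1)) ⇑ψ)) =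
      (chMap (joinFun (id : Fin (m+1) → Fin (m+1)) ⇑ψ)).comp (fN m n') := by
  rw [fN_eq_splitMap, fN_eq_splitMap]
  exact (preservesSplit_joinFun_id ψ).splitMap_comp_chMap

end
end
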